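/- arXiv:1311.2330 — 3 statements merged into one kernel-verified Lean document; each statement's English description precedes it below -/
import Mathlib

section
/- Let α ≥ 2 be a cardinal and κ an infinite cardinal. Then: (a) the following are equivalent: (i) α^{<κ} = (α^{<κ})^{<κ}; (ii) either κ is regular or there is a cardinal ν < κ such that α^ν = α^{<κ}. (b) If the conditions in (a) fail, then κ and α^{<κ} are both singular cardinals and cf(α^{<κ}) = cf(κ). -/
open Cardinal TopologicalSpace Set

universe u

/-!
Write `μ = α ^< κ`. If `μ = α ^ ν` for some `ν < κ`, then `μ ^ x = α ^ (ν * x) ≤ μ` for every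
`x < κ`. Otherwise `ν ↦ α ^ ν` maps the cardinals below `κ` monotonically and cofinally into
those below `μ`, so `cf μ = cf κ`. For regular `κ` this gives `x < cf μ`, so every `x`-sequence in
`μ` is bounded and `μ ^ x ≤ μ · sup_{c < μ} c ^ x = μ`. For singular `κ`, König's theorem gives
`μ < μ ^ cf μ = μ ^ cf κ ≤ μ ^< κ`, and `μ` is singular because `cf μ = cf κ < κ ≤ μ`.
-/

theorem Order.cof_le_of_monotone {α β : Type u} [Preorder α] [Preorder β] {f : α → β}
    (hf : Monotone f) (hf' : IsCofinal (range f)) : Order.cof β ≤ Order.cof α := by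
  obtain ⟨s, hs, hs'⟩ := Order.exists_cof_eq α
  exact (cof_le (hs.image hf hf')).trans (mk_image_le.trans hs'.le)

theorem Order.exists_forall_lt_of_mk_lt_cof {α ι : Type u} [LinearOrder α] {f : ι → α}
    (h : #ι < Order.cof α) : ∃ b, ∀ i, f i < b := by
  by_contra! hf
  have hcof : IsCofinal (range f) := by
    by_contra hnc
    obtain ⟨b, hb⟩ := not_isCofinal_iff.1 hnc
    obtain ⟨i, hi⟩ := hf b
    exact hi.not_gt (hb _ (mem_range_self i))
  exact ((cof_le hcof).trans mk_range_le).not_gt h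

namespace Ordinal

theorem cof_le_of_monotone {o o' : Ordinal.{u}} {f : Iio o → Iio o'} (hf : Monotone f)
    (hf' : IsCofinal (range f)) : o'.cof ≤ o.cof := by
  have := Order.cof_le_of_monotone hf hf'
  rwa [cof_Iio, cof_Iio, ← lift_cof, ← lift_cof, Cardinal.lift_le] at this

end Ordinal

namespace Cardinal

theorem lt_powerlt_iff {a b c : Cardinal.{u}} : c < a ^< b ↔ ∃ x < b, c < a ^ x := by
  simp only [← not_le, powerlt_le, not_forall, exists_prop]

theorem le_powerlt_of_two_le {a : Cardinal.{u}} (ha : 2 ≤ a) (b : Cardinal.{u}) : b ≤ a ^< b := by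
  by_contra! h
  exact (cantor _ |>.trans_le (power_le_power_right ha) |>.trans_le (le_powerlt a h)).false

theorem le_powerlt_self (a : Cardinal.{u}) {b : Cardinal.{u}} (hb : 1 < b) : a ≤ a ^< b := by
  simpa using le_powerlt a hb

theorem power_le_of_lt_cof_ord {μ ν : Cardinal.{u}} (hμ : ℵ₀ ≤ μ) (hν : ν < μ.ord.cof)
    (h : ∀ c < μ, c ^ ν ≤ μ) : μ ^ ν ≤ μ := by
  induction ν using Cardinal.inductionOn with | _ L
  set T := μ.ord.ToType
  have hsurj : Function.Surjective fun p : Σ b : T, (L → Iio b) => fun i => ((p.2 i) : T) := by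
    intro f
    obtain ⟨b, hb⟩ := Order.exists_forall_lt_of_mk_lt_cof (f := f) (by rwa [Ordinal.cof_toType])
    exact ⟨⟨b, fun i => ⟨f i, hb i⟩⟩, rfl⟩
  calc μ ^ #L = #(L → T) := by rw [← power_def, mk_ord_toType]
    _ ≤ #(Σ b : T, (L → Iio b)) := mk_le_of_surjective hsurj
    _ = sum fun b : T => #(Iio b) ^ #L := by simp only [mk_sigma, power_def]
    _ ≤ sum fun _ : T => μ := sum_le_sum _ _ fun b =>
      h _ ((mk_Iio_lt b (by rw [mk_ord_toType, Ordinal.type_toType])).trans_eq (mk_ord_toType μ))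
    _ = μ := by rw [sum_const', mk_ord_toType, mul_eq_self hμ]

theorem cof_ord_le_of_monotoneOn {f : Cardinal.{u} → Cardinal.{u}} {κ μ : Cardinal.{u}}
    (hf : MonotoneOn f (Iio κ)) (hlt : ∀ ν < κ, f ν < μ) (hcof : ∀ c < μ, ∃ ν < κ, c < f ν) :
    μ.ord.cof ≤ κ.ord.cof := by
  let F : Iio κ.ord → Iio μ.ord := fun o =>
    ⟨(f o.1.card).ord, ord_lt_ord.2 (hlt _ (lt_ord.1 o.2))⟩
  refine Ordinal.cof_le_of_monotone (f := F) ?_ ?_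
  · intro o o' h
    exact ord_le_ord.2 (hf (lt_ord.1 o.2) (lt_ord.1 o'.2) (Ordinal.card_le_card h))
  · rintro ⟨p, hp⟩
    obtain ⟨ν, hν, hlt⟩ := hcof _ (lt_ord.1 hp)
    refine ⟨F ⟨ν.ord, ord_lt_ord.2 hν⟩, mem_range_self _, ?_⟩
    change p ≤ (f ν.ord.card).ord
    rw [card_ord]
    exact (lt_ord.2 hlt).le

theorem cof_ord_eq_of_monotone {f : Cardinal.{u} → Cardinal.{u}} {κ μ : Cardinal.{u}}
    (hf : Monotone f) (hlt : ∀ ν < κ, f ν < μ) (hcof : ∀ c < μ, ∃ ν < κ, c < f ν) :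
    μ.ord.cof = κ.ord.cof := by
  refine le_antisymm (cof_ord_le_of_monotoneOn (hf.monotoneOn _) hlt hcof) ?_
  -- the reverse comparison goes through the least-index inverse `c ↦ min {ν | c < f ν}`
  have hne (c) (hc : c < μ) : {ν | c < f ν}.Nonempty :=
    let ⟨ν, _, hν⟩ := hcof c hc; ⟨ν, hν⟩
  refine cof_ord_le_of_monotoneOn (f := fun c => sInf {ν | c < f ν}) ?_ ?_ ?_
  · intro c hc c' hc' h
    exact csInf_le_csInf' (hne c' hc') fun ν hν => h.trans_lt hν
  · intro c hc
    obtain ⟨ν, hν, hcν⟩ := hcof c hc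
    exact (csInf_le' (s := {ν | c < f ν}) hcν).trans_lt hν
  · intro ν hν
    refine ⟨f ν, hlt ν hν, ?_⟩
    have hmem : f ν < f (sInf {ν' | f ν < f ν'}) := csInf_mem (hne _ (hlt ν hν))
    by_contra! hle
    exact (hf hle).not_gt hmem

variable {α κ : Cardinal.{u}}

theorem power_power_le_powerlt (hκ : ℵ₀ ≤ κ) {ν x : Cardinal.{u}} (hν : ν < κ) (hx : x < κ) :
    (α ^ ν) ^ x ≤ α ^< κ := by
  rw [← power_mul]
  exact le_powerlt α (mul_lt_of_lt hκ hν hx)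

theorem cof_ord_powerlt (hα : α ≠ 0) (hna : ∀ ν < κ, α ^ ν < α ^< κ) :
    (α ^< κ).ord.cof = κ.ord.cof :=
  cof_ord_eq_of_monotone (fun _ _ h => power_le_power_left hα h) hna fun _ => lt_powerlt_iff.1

theorem powerlt_powerlt_le_of_power_eq (hκ : ℵ₀ ≤ κ) {ν : Cardinal.{u}} (hν : ν < κ)
    (h : α ^ ν = α ^< κ) : (α ^< κ) ^< κ ≤ α ^< κ :=
  powerlt_le.2 fun _ hx => h ▸ power_power_le_powerlt (α := α) hκ hν hx

theorem powerlt_powerlt_le_of_isRegular (hα : 2 ≤ α) (hκ : κ.IsRegular)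
    (hna : ∀ ν < κ, α ^ ν < α ^< κ) : (α ^< κ) ^< κ ≤ α ^< κ := by
  have hcof : (α ^< κ).ord.cof = κ := by
    rw [cof_ord_powerlt (by positivity) hna, hκ.cof_ord]
  refine powerlt_le.2 fun x hx => power_le_of_lt_cof_ord ?_ (by rwa [hcof]) fun c hc => ?_
  · exact hκ.aleph0_le.trans (le_powerlt_of_two_le hα κ)
  · obtain ⟨ν, hν, hcν⟩ := lt_powerlt_iff.1 hc
    exact (power_le_power_right hcν.le).trans (power_power_le_powerlt hκ.aleph0_le hν hx)

theorem powerlt_lt_powerlt_powerlt (hα : 2 ≤ α) (hκ : κ.IsSingular)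
    (hna : ∀ ν < κ, α ^ ν < α ^< κ) : α ^< κ < (α ^< κ) ^< κ :=
  calc α ^< κ < (α ^< κ) ^ (α ^< κ).ord.cof :=
        lt_power_cof_ord (hκ.aleph0_le.trans (le_powerlt_of_two_le hα κ))
    _ = (α ^< κ) ^ κ.ord.cof := by rw [cof_ord_powerlt (by positivity) hna]
    _ ≤ (α ^< κ) ^< κ := le_powerlt _ hκ.cof_ord_lt

end Cardinal

theorem stmt1 (α κ : Cardinal.{u}) (hα : 2 ≤ α) (hκ : ℵ₀ ≤ κ) :
    ((α ^< κ = (α ^< κ) ^< κ) ↔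
      (κ.IsRegular ∨ ∃ ν < κ, α ^ ν = α ^< κ)) ∧
    (¬(α ^< κ = (α ^< κ) ^< κ) →
      (ℵ₀ ≤ κ ∧ ¬κ.IsRegular) ∧ (ℵ₀ ≤ α ^< κ ∧ ¬(α ^< κ).IsRegular) ∧
        ((α ^< κ).ord).cof = (κ.ord).cof) := by
  have hκμ : κ ≤ α ^< κ := le_powerlt_of_two_le hα κ
  have hna (hatt : ¬∃ ν < κ, α ^ ν = α ^< κ) : ∀ ν < κ, α ^ ν < α ^< κ :=
    fun ν hν => (le_powerlt α hν).lt_of_ne fun he => hatt ⟨ν, hν, he⟩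
  have hiff : (α ^< κ = (α ^< κ) ^< κ) ↔ (κ.IsRegular ∨ ∃ ν < κ, α ^ ν = α ^< κ) := by
    refine ⟨fun h => ?_, fun h => ?_⟩
    · by_contra hfail
      obtain ⟨hreg, hatt⟩ := not_or.1 hfail
      exact (powerlt_lt_powerlt_powerlt hα (.of_not_isRegular hκ hreg) (hna hatt)).ne h
    · refine le_antisymm (le_powerlt_self _ (one_lt_aleph0.trans_le hκ)) ?_
      by_cases hatt : ∃ ν < κ, α ^ ν = α ^< κ
      · obtain ⟨ν, hν, he⟩ := hatt
        exact powerlt_powerlt_le_of_power_eq hκ hν he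
      · exact powerlt_powerlt_le_of_isRegular hα (h.resolve_right hatt) (hna hatt)
  refine ⟨hiff, fun hfail => ?_⟩
  obtain ⟨hreg, hatt⟩ := not_or.1 (hiff.not.1 hfail)
  have hsing : κ.IsSingular := .of_not_isRegular hκ hreg
  have hcof := cof_ord_powerlt (by positivity) (hna hatt)
  refine ⟨⟨hκ, hreg⟩, ⟨hκ.trans hκμ, fun hμreg => ?_⟩, hcof⟩
  have : α ^< κ < α ^< κ :=
    calc α ^< κ = κ.ord.cof := hμreg.cof_ord.symm.trans hcof
      _ < κ := hsing.cof_ord_lt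
      _ ≤ α ^< κ := hκμ
  exact this.false
end

section
/- Let α and κ be infinite cardinals, and let {X_i : i ∈ I} be a set of topological spaces such that |I| = α, and for each i ∈ I, 2 ⊆_h X_i and w(X_i) ≤ α. Then: (a) if κ ≤ α⁺ then w((X_I)_κ) = α^{<κ}; and (b) if κ ≥ α⁺ then w((X_I)_κ) = 2^α. -/
open Cardinal TopologicalSpace Set

universe u

/-- The `κ`-box topology on a product of topological spaces: generated by the boxes
`Π i, U i` with each `U i` open and fewer than `κ` coordinates restricted. -/
def boxTopology (κ : Cardinal.{u}) {ι : Type u} (X : ι → Type u)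
    [∀ i, TopologicalSpace (X i)] : TopologicalSpace (∀ i, X i) :=
  TopologicalSpace.generateFrom
    {S | ∃ U : ∀ i, Set (X i), (∀ i, IsOpen (U i)) ∧
      #{i | U i ≠ Set.univ} < κ ∧ S = Set.pi Set.univ U}

/-- The weight of a topological space: the least cardinality of a topological base
(finite values allowed). -/
noncomputable def wt (X : Type u) [TopologicalSpace X] : Cardinal.{u} :=
  sInf {c | ∃ B : Set (Set X), IsTopologicalBasis B ∧ #B = c}

/-- `Y ⊆ₕ X`: `X` contains a homeomorphic copy of `Y`. -/
def ContainsHomeoCopy (Y X : Type u) [TopologicalSpace Y] [TopologicalSpace X] : Prop :=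
  ∃ f : Y → X, Topology.IsEmbedding f

/-!
If every factor has a base of size `≤ α`, the boxes whose sides are basic sets, fewer than `κ` of
them proper, form a base; it is indexed by subsets of size `< κ` of a set of size `α`. Conversely,
choose in each factor an open `V i` containing `b i` but not `a i`; for `|D|, |D'| < κ` the point
that is `b` on `D` and `a` off `D` lies in the open box `Π_{i ∈ D'} V i` iff `D' ⊆ D`, so a base
needs a distinct member for each `D`. Hence `w((X_I)_κ) = |[α]^{<κ}|`, which is `α^{<κ}` when
`κ ≤ α⁺` and `2^α` when `κ > α`.
-/

section Weight

variable {X : Type u} [TopologicalSpace X]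

theorem wt_le_mk {B : Set (Set X)} (hB : IsTopologicalBasis B) : wt X ≤ #B :=
  csInf_le (OrderBot.bddBelow _) ⟨B, hB, rfl⟩

theorem exists_isTopologicalBasis_mk_eq_wt (X : Type u) [TopologicalSpace X] :
    ∃ B : Set (Set X), IsTopologicalBasis B ∧ #B = wt X :=
  csInf_mem (s := {c | ∃ B : Set (Set X), IsTopologicalBasis B ∧ #B = c})
    ⟨_, _, isTopologicalBasis_opens, rfl⟩

theorem le_wt {c : Cardinal.{u}} (h : ∀ B : Set (Set X), IsTopologicalBasis B → c ≤ #B) :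
    c ≤ wt X := by
  obtain ⟨B, hB, hBwt⟩ := exists_isTopologicalBasis_mk_eq_wt X
  exact hBwt ▸ h B hB

theorem mk_le_wt_of_separating {T : Type u} (x : T → X) (W : T → Set X)
    (hW : ∀ t, IsOpen (W t)) (hx : ∀ t, x t ∈ W t)
    (hsep : ∀ s t, x s ∈ W t → x t ∈ W s → s = t) : #T ≤ wt X := by
  refine le_wt fun B hB => ?_
  choose b hbB hxb hbW using fun t => hB.exists_subset_of_mem_open (hx t) (hW t)
  refine mk_le_of_injective (f := fun t => (⟨b t, hbB t⟩ : B)) fun s t hst => ?_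
  have hb : b s = b t := congrArg Subtype.val hst
  exact hsep s t (hbW t (hb ▸ hxb s)) (hbW s (hb ▸ hxb t))

end Weight

theorem ContainsHomeoCopy.exists_isOpen_mem_notMem {Y : Type u} [TopologicalSpace Y]
    (h : ContainsHomeoCopy (ULift.{u} Bool) Y) :
    ∃ (a b : Y) (V : Set Y), IsOpen V ∧ b ∈ V ∧ a ∉ V := by
  obtain ⟨f, hf⟩ := h
  obtain ⟨V, hV, hfV⟩ := hf.isInducing.isOpen_iff.mp (isOpen_discrete {ULift.up true})
  refine ⟨f ⟨false⟩, f ⟨true⟩, V, hV, ?_, ?_⟩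
  · change ULift.up true ∈ f ⁻¹' V
    simp [hfV]
  · change ULift.up false ∉ f ⁻¹' V
    simp [hfV]

section SmallSubsets

variable {γ δ : Type u} {α κ : Cardinal.{u}}

theorem mk_setOf_mk_lt_le_of_embedding (f : γ ↪ δ) :
    #{E : Set γ | #E < κ} ≤ #{E : Set δ | #E < κ} := by
  refine mk_le_of_injective (f := fun E => ⟨f '' E.1, ?_⟩) fun E F hEF => ?_
  · exact (mk_image_eq f.injective).trans_lt E.2
  · exact Subtype.ext (image_injective.mpr f.injective (congrArg Subtype.val hEF))

theorem mk_pi_le_mk_setOf_mk_lt (hγ : #γ < κ) :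
    #(γ → δ) ≤ #{E : Set (γ × δ) | #E < κ} := by
  refine mk_le_of_injective (f := fun g => ⟨Function.graph g, ?_⟩) fun g h hgh => ?_
  · refine (mk_le_of_injective (f := fun p : Function.graph g => p.1.1) ?_).trans_lt hγ
    rintro ⟨⟨x, y⟩, rfl : g x = y⟩ ⟨⟨x', y'⟩, rfl : g x' = y'⟩ (rfl : x = x')
    rfl
  · exact Function.graph_injective (congrArg Subtype.val hgh)

theorem le_powerlt_self (hα : 2 ≤ α) : κ ≤ α ^< κ := by
  by_contra! h
  exact (cantor _).not_ge ((power_le_power_right hα).trans (le_powerlt α h))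

/-- In a well-order of type `κ.ord` every set of size `< κ` has the size of some initial segment,
so these sets form `κ` families, each of size at most `α ^ λ` for some `λ < κ`. -/
theorem mk_setOf_mk_lt_le_powerlt (hα : ℵ₀ ≤ α) (hκ : ℵ₀ ≤ κ) (hγ : #γ ≤ α) :
    #{E : Set γ | #E < κ} ≤ α ^< κ := by
  induction κ using Cardinal.inductionOn with | mk β
  obtain ⟨_, _, hβ⟩ := exists_ord_eq_type_lt β
  have hcover : {E : Set γ | #E < #β} ⊆ ⋃ i : β, {E | #E ≤ #(Iio i)} := by
    intro E hE
    obtain ⟨i, hi⟩ := Ordinal.typein_surj (α := β) (· < ·) (hβ ▸ ord_lt_ord.2 hE)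
    refine mem_iUnion.2 ⟨i, ?_⟩
    have hEi : #(Iio i) = #E := by rw [← card_ord #E, ← hi]; rfl
    exact hEi.ge
  have hterm (i : β) : #{E : Set γ | #E ≤ #(Iio i)} ≤ α ^< #β :=
    (mk_bounded_set_le γ _).trans <|
      (power_le_power_right (max_le hγ hα)).trans (le_powerlt α (mk_Iio_lt i hβ))
  have hβα : #β ≤ α ^< #β := le_powerlt_self (ofNat_lt_aleph0.le.trans hα)
  calc #{E : Set γ | #E < #β} ≤ #(⋃ i : β, {E : Set γ | #E ≤ #(Iio i)}) :=
        mk_le_mk_of_subset hcover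
    _ ≤ sum fun i : β => #{E : Set γ | #E ≤ #(Iio i)} := mk_iUnion_le_sum_mk
    _ ≤ sum fun _ : β => α ^< #β := sum_le_sum _ _ hterm
    _ = #β * α ^< #β := sum_const' _ _
    _ ≤ α ^< #β * α ^< #β := mul_le_mul_left hβα _
    _ = α ^< #β := mul_eq_self (hκ.trans hβα)

theorem powerlt_le_mk_setOf_mk_lt (hγ : ℵ₀ ≤ #γ) (hκ : κ ≤ Order.succ #γ) :
    #γ ^< κ ≤ #{E : Set γ | #E < κ} := by
  refine powerlt_le.2 fun c hc => ?_
  induction c using Cardinal.inductionOn with | mk L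
  have hL : #L ≤ #γ := Order.lt_succ_iff.mp (hc.trans_le hκ)
  obtain ⟨e⟩ : Nonempty (L × γ ↪ γ) := by
    rw [← le_def, mk_prod, lift_id, lift_id]
    exact (mul_le_mul_left hL _).trans (mul_eq_self hγ).le
  calc #γ ^ #L = #(L → γ) := power_def γ L
    _ ≤ #{E : Set (L × γ) | #E < κ} := mk_pi_le_mk_setOf_mk_lt hc
    _ ≤ #{E : Set γ | #E < κ} := mk_setOf_mk_lt_le_of_embedding e

end SmallSubsets

section BoxTopology

variable {κ : Cardinal.{u}} {ι : Type u} {X : ι → Type u} [∀ i, TopologicalSpace (X i)]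

variable (κ X) in
def boxBasis : Set (Set (∀ i, X i)) :=
  {S | ∃ U : ∀ i, Set (X i), (∀ i, IsOpen (U i)) ∧
    #{i | U i ≠ Set.univ} < κ ∧ S = Set.pi Set.univ U}

theorem isTopologicalBasis_boxBasis (hκ : ℵ₀ ≤ κ) :
    @IsTopologicalBasis _ (boxTopology κ X) (boxBasis κ X) := by
  let := boxTopology κ X
  refine ⟨?_, ?_, rfl⟩
  · rintro _ ⟨U, hU, hUκ, rfl⟩ _ ⟨V, hV, hVκ, rfl⟩ x hx
    refine ⟨pi univ fun i => U i ∩ V i, ⟨_, fun i => (hU i).inter (hV i), ?_, rfl⟩,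
      pi_inter_distrib ▸ hx, pi_inter_distrib.subset⟩
    have hsupp : {i | U i ∩ V i ≠ Set.univ} ⊆ {i | U i ≠ Set.univ} ∪ {i | V i ≠ Set.univ} := by
      intro i hi
      contrapose! hi
      simp_all
    exact (mk_le_mk_of_subset hsupp).trans_lt
      ((mk_union_le _ _).trans_lt (add_lt_of_lt hκ hUκ hVκ))
  · refine sUnion_eq_univ_iff.2 fun x =>
      ⟨Set.univ, ⟨fun _ => Set.univ, fun _ => isOpen_univ, ?_, (pi_univ _).symm⟩, trivial⟩
    simpa using aleph0_pos.trans_le hκ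

/-- Boxes whose sides are basic open sets or, encoded by `none`, the whole factor. -/
theorem isTopologicalBasis_boxTopology_of_isTopologicalBasis (hκ : ℵ₀ ≤ κ)
    {B : ∀ i, Set (Set (X i))} (hB : ∀ i, IsTopologicalBasis (B i)) :
    @IsTopologicalBasis _ (boxTopology κ X)
      ((fun u : ∀ i, Option (B i) => pi univ fun i => (u i).elim Set.univ Subtype.val) ''
        {u | #{i | u i ≠ none} < κ}) := by
  let := boxTopology κ X
  have hbox := isTopologicalBasis_boxBasis (X := X) hκ
  refine isTopologicalBasis_of_isOpen_of_nhds ?_ fun x o hxo ho => ?_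
  · rintro _ ⟨u, hu, rfl⟩
    refine hbox.isOpen ⟨_, fun i => ?_, (mk_le_mk_of_subset fun i hi => ?_).trans_lt hu, rfl⟩
    · cases u i with
      | none => exact isOpen_univ
      | some b => exact (hB i).isOpen b.2
    · contrapose! hi
      simp_all
  obtain ⟨_, ⟨U, hU, hUκ, rfl⟩, hxU, hUo⟩ := hbox.exists_subset_of_mem_open hxo ho
  have hside (i : ι) : ∃ v : Option (B i), (v ≠ none → U i ≠ Set.univ) ∧
      x i ∈ v.elim Set.univ Subtype.val ∧ v.elim Set.univ Subtype.val ⊆ U i := by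
    by_cases hUi : U i = Set.univ
    · exact ⟨none, fun h => absurd rfl h, trivial, hUi.ge⟩
    · obtain ⟨b, hb, hxb, hbU⟩ := (hB i).exists_subset_of_mem_open (hxU i trivial) (hU i)
      exact ⟨some ⟨b, hb⟩, fun _ => hUi, hxb, hbU⟩
  choose u hu hxu huU using hside
  exact ⟨_, ⟨u, (mk_le_mk_of_subset hu).trans_lt hUκ, rfl⟩, fun i _ => hxu i,
    (pi_mono fun i _ => huU i).trans hUo⟩

theorem mk_setOf_mk_support_lt_le {β : ι → Type u} :
    #{u : ∀ i, Option (β i) | #{i | u i ≠ none} < κ} ≤ #{E : Set (Σ i, β i) | #E < κ} := by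
  let graph (u : ∀ i, Option (β i)) : Set (Σ i, β i) := {p | u p.1 = some p.2}
  refine mk_le_of_injective (f := fun u => ⟨graph u.1, ?_⟩) fun u v huv => ?_
  · refine (mk_le_of_injective (f := fun p : graph u.1 => (⟨p.1.1, ?_⟩ : {i | u.1 i ≠ none}))
      ?_).trans_lt u.2
    · simp [show u.1 p.1.1 = some p.1.2 from p.2]
    · rintro ⟨⟨i, b⟩, hb⟩ ⟨⟨j, c⟩, hc⟩ hij
      obtain rfl : i = j := congrArg Subtype.val hij
      have hbc : some b = some c := hb.symm.trans hc
      simp_all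
  · have hgraph : graph u.1 = graph v.1 := congrArg Subtype.val huv
    exact Subtype.ext <| funext fun i => Option.ext fun b => Set.ext_iff.1 hgraph ⟨i, b⟩

theorem mk_setOf_mk_lt_le_wt_boxTopology
    (hX : ∀ i, ∃ (a b : X i) (V : Set (X i)), IsOpen V ∧ b ∈ V ∧ a ∉ V) :
    #{D : Set ι | #D < κ} ≤ @wt _ (boxTopology κ X) := by
  classical
  let := boxTopology κ X
  choose a b V hV hbV haV using hX
  have hpoint {D D' : Set ι} (h : D.piecewise b a ∈ D'.pi V) : D' ⊆ D := fun i hi => by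
    by_contra hiD
    exact haV i (by simpa [hiD] using h i hi)
  refine mk_le_wt_of_separating (fun D => D.1.piecewise b a) (fun D => D.1.pi V)
    (fun D => ?_) (fun D i hi => by simp [hi, hbV]) fun D D' h h' =>
      Subtype.ext ((hpoint h').antisymm (hpoint h))
  refine isOpen_generateFrom_of_mem ⟨fun i => if i ∈ D.1 then V i else Set.univ,
    fun i => ?_, (mk_le_mk_of_subset fun i => ?_).trans_lt D.2, (pi_univ_ite _ _).symm⟩
  · dsimp only
    split_ifs
    exacts [hV i, isOpen_univ]
  · simp +contextual

end BoxTopology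

theorem stmt4 (α κ : Cardinal.{u}) (hα : ℵ₀ ≤ α) (hκ : ℵ₀ ≤ κ)
    {ι : Type u} (X : ι → Type u) [∀ i, TopologicalSpace (X i)]
    (hI : #ι = α) (h2 : ∀ i, ContainsHomeoCopy (ULift.{u} Bool) (X i))
    (hw : ∀ i, wt (X i) ≤ α) :
    (κ ≤ Order.succ α → @wt (∀ i, X i) (boxTopology κ X) = α ^< κ) ∧
    (Order.succ α ≤ κ → @wt (∀ i, X i) (boxTopology κ X) = 2 ^ α) := by
  subst hI
  choose B hB hBwt using fun i => exists_isTopologicalBasis_mk_eq_wt (X i)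
  have hsides : #(Σ i, B i) ≤ #ι := by
    rw [mk_sigma]
    calc sum (fun i => #(B i)) ≤ sum fun _ : ι => #ι :=
          sum_le_sum _ _ fun i => (hBwt i).trans_le (hw i)
      _ = #ι := by rw [sum_const', mul_eq_self hα]
  have hupper : @wt _ (boxTopology κ X) ≤ #{E : Set (Σ i, B i) | #E < κ} :=
    (@wt_le_mk _ (boxTopology κ X) _
      (isTopologicalBasis_boxTopology_of_isTopologicalBasis hκ hB)).trans
      (mk_image_le.trans mk_setOf_mk_support_lt_le)
  have hlower : #{D : Set ι | #D < κ} ≤ @wt _ (boxTopology κ X) :=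
    mk_setOf_mk_lt_le_wt_boxTopology fun i => (h2 i).exists_isOpen_mem_notMem
  refine ⟨fun hκι => le_antisymm ?_ ?_, fun hκι => le_antisymm ?_ ?_⟩
  · exact hupper.trans (mk_setOf_mk_lt_le_powerlt hα hκ hsides)
  · exact (powerlt_le_mk_setOf_mk_lt hα hκι).trans hlower
  · calc _ ≤ #{E : Set (Σ i, B i) | #E < κ} := hupper
      _ ≤ #(Set (Σ i, B i)) := mk_subtype_le _
      _ = 2 ^ #(Σ i, B i) := mk_set
      _ ≤ 2 ^ #ι := power_le_power_left two_ne_zero hsides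
  · have hall : {D : Set ι | #D < κ} = Set.univ :=
      eq_univ_of_forall fun D => (mk_set_le D).trans_lt ((Order.lt_succ _).trans_le hκι)
    calc 2 ^ #ι = #{D : Set ι | #D < κ} := by rw [hall, mk_univ, mk_set]
      _ ≤ _ := hlower
end

section
/- Let α ≥ 2, β ≥ ω, and κ ≥ ω be cardinals. Then: (a) the space E := (D(α))^{2^β} satisfies d(E_κ) ≤ (α·β)^{<κ}; and (b) the space E' := (D(α))^β satisfies d(E'_κ) ≤ (α·log(β))^{<κ}, where log(β) := min{γ : 2^γ ≥ β}. -/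
open Cardinal TopologicalSpace Set

universe u

/-- The density character of a topological space: the least cardinality of a dense subset
(finite values allowed). -/
noncomputable def dens (X : Type u) [TopologicalSpace X] : Cardinal.{u} :=
  sInf {c | ∃ D : Set X, Dense D ∧ #D = c}

/-- `log β`: the least cardinal `γ` with `2 ^ γ ≥ β`. -/
noncomputable def clog (β : Cardinal.{u}) : Cardinal.{u} :=
  sInf {γ | β ≤ 2 ^ γ}
/-!
Identify the exponent `2 ^ β` with `𝒫(B)`, `#B = β`. A basic open box restricts a set `J` of
fewer than `κ` coordinates; choosing one point of `B` in the symmetric difference of each pair of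
distinct members of `J` gives a set `S ⊆ B` of size `< κ` on which the members of `J` have
pairwise distinct traces. Hence the box contains a point that reads each coordinate `c` only
through its trace `c ∩ S` and looks that trace up in a table of size `< κ`. Such points are
described by fewer than `κ` elements of `B`, of `𝒫(S)` and of `A`, so there are at most
`(α * β) ^< κ` of them. For (b), the exponent `β` embeds into `𝒫(log β)`.
-/

theorem isTopologicalBasis_boxTopology (κ : Cardinal.{u}) (hκ : ℵ₀ ≤ κ) {ι : Type u}
    (X : ι → Type u) [∀ i, TopologicalSpace (X i)] :
    @IsTopologicalBasis (∀ i, X i) (boxTopology κ X)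
      {S | ∃ U : ∀ i, Set (X i), (∀ i, IsOpen (U i)) ∧
        #{i | U i ≠ Set.univ} < κ ∧ S = Set.pi Set.univ U} := by
  refine @IsTopologicalBasis.mk _ (boxTopology κ X) _ ?_ ?_ rfl
  · rintro _ ⟨U, hUo, hUκ, rfl⟩ _ ⟨V, hVo, hVκ, rfl⟩ x hx
    refine ⟨_, ⟨fun i => U i ∩ V i, fun i => (hUo i).inter (hVo i), ?_, rfl⟩, ?_, ?_⟩
    · have hsub : {i | U i ∩ V i ≠ Set.univ} ⊆ {i | U i ≠ Set.univ} ∪ {i | V i ≠ Set.univ} := by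
        intro i hi
        by_contra h
        simp_all
      exact (mk_le_mk_of_subset hsub).trans_lt
        ((mk_union_le _ _).trans_lt (add_lt_of_lt hκ hUκ hVκ))
    · rwa [pi_inter_distrib]
    · rw [pi_inter_distrib]
  · refine sUnion_eq_univ_iff.2 fun _ =>
      ⟨Set.univ, ⟨fun _ => Set.univ, fun _ => isOpen_univ, ?_, ?_⟩, trivial⟩
    · simpa using aleph0_pos.trans_le hκ
    · simp

theorem dense_boxTopology_of_forall_eqOn (κ : Cardinal.{u}) (hκ : ℵ₀ ≤ κ) {ι : Type u}
    (X : ι → Type u) [∀ i, TopologicalSpace (X i)] {D : Set (∀ i, X i)}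
    (h : ∀ J : Set ι, #J < κ → ∀ z : ∀ i, X i, ∃ x ∈ D, ∀ i ∈ J, x i = z i) :
    @Dense _ (boxTopology κ X) D := by
  refine (@IsTopologicalBasis.dense_iff _ (boxTopology κ X) _
    (isTopologicalBasis_boxTopology κ hκ X) _).2 ?_
  rintro _ ⟨U, -, hUκ, rfl⟩ ⟨z, hz⟩
  obtain ⟨x, hxD, hxz⟩ := h _ hUκ z
  refine ⟨x, fun i _ => ?_, hxD⟩
  by_cases hi : U i = Set.univ
  · simp [hi]
  · exact hxz i hi ▸ hz i trivial

theorem dens_le_mk {X : Type u} [TopologicalSpace X] {D : Set X} (hD : Dense D) :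
    dens X ≤ #D :=
  csInf_le' ⟨D, hD, rfl⟩

namespace Cardinal

theorem le_powerlt_of_two_le_s6 {γ : Cardinal.{u}} (κ : Cardinal.{u}) (hγ : 2 ≤ γ) :
    κ ≤ γ ^< κ := by
  by_contra! h
  exact (cantor _).not_ge <|
    (power_le_power_right hγ).trans (le_powerlt γ h)

theorem exists_mk_Iio_eq {κ l : Cardinal.{u}} (hl : l < κ) :
    ∃ t : κ.ord.ToType, #(Iio t) = l := by
  have h : l.ord < Ordinal.type (α := κ.ord.ToType) (· < ·) := by
    rwa [Ordinal.type_toType, ord_lt_ord]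
  obtain ⟨t, ht⟩ := Ordinal.typein_surj (· < ·) h
  exact ⟨t, by rw [← card_ord l, ← ht, Ordinal.card_typein]; rfl⟩

end Cardinal

theorem le_two_power_clog (β : Cardinal.{u}) : β ≤ 2 ^ clog β :=
  csInf_mem (s := {γ | β ≤ 2 ^ γ}) ⟨β, (cantor β).le⟩

theorem clog_ne_zero {β : Cardinal.{u}} (hβ : 1 < β) : clog β ≠ 0 := by
  intro h
  have := le_two_power_clog β
  rw [h, power_zero] at this
  exact hβ.not_ge this

open scoped symmDiff in
theorem exists_injOn_inter_of_injOn {C B : Type u} {e : C → Set B} {J : Set C}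
    (he : InjOn e J) : ∃ S : Set B, #S ≤ #J * #J ∧ InjOn (fun c => S ∩ e c) J := by
  have hsep : ∀ p : {p : J × J // e p.1 ≠ e p.2}, (e p.1.1 ∆ e p.1.2).Nonempty :=
    fun p => symmDiff_nonempty.2 p.2
  choose b hb using hsep
  refine ⟨range b, mk_range_le.trans ?_, fun c hc c' hc' hcc' => ?_⟩
  · simpa using mk_subtype_le (fun p : J × J => e p.1 ≠ e p.2)
  · by_contra hne
    set p : {p : J × J // e p.1 ≠ e p.2} := ⟨(⟨c, hc⟩, ⟨c', hc'⟩), he.ne hc hc' hne⟩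
    have hiff : b p ∈ e c ↔ b p ∈ e c' := by
      simpa using Set.ext_iff.1 hcc' (b p)
    exact (mem_symmDiff.1 (hb p)).elim (fun h => h.2 (hiff.1 h.1)) fun h => h.2 (hiff.2 h.1)

section TraceLookup

variable {A B C : Type u} (e : C → Set B) (a₀ : A)

noncomputable def traceLookup {I I' : Type u} (u : I → B) (τ : I' → Set I) (v : I' → A) :
    C → A :=
  open scoped Classical in
  fun c => if h : ∃ j, τ j = u ⁻¹' e c then v h.choose else a₀

theorem traceLookup_apply {I I' : Type u} {u : I → B} {w : I' → C}
    (hu : InjOn (fun c => u ⁻¹' e c) (range w)) (z : C → A) (j : I') :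
    traceLookup e a₀ u (fun j => u ⁻¹' e (w j)) (z ∘ w) (w j) = z (w j) := by
  have h : ∃ j', u ⁻¹' e (w j') = u ⁻¹' e (w j) := ⟨j, rfl⟩
  rw [traceLookup, dif_pos h, Function.comp_apply,
    hu (mem_range_self _) (mem_range_self _) h.choose_spec]

/-- Index types of size `< κ` are taken to be initial segments of `κ.ord.ToType`, so that
there are only `κ` of them. -/
def traceLookupSet (κ : Cardinal.{u}) : Set (C → A) :=
  ⋃ t : κ.ord.ToType × κ.ord.ToType,
    range fun p : (Iio t.1 → B) × (Iio t.2 → Set (Iio t.1)) × (Iio t.2 → A) =>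
      traceLookup e a₀ p.1 p.2.1 p.2.2

theorem dense_traceLookupSet [TopologicalSpace A] {κ : Cardinal.{u}} (hκ : ℵ₀ ≤ κ)
    (he : Function.Injective e) :
    @Dense _ (boxTopology κ fun _ => A) (traceLookupSet e a₀ κ) := by
  refine dense_boxTopology_of_forall_eqOn κ hκ _ fun J hJ z => ?_
  obtain ⟨S, hSJ, hS⟩ := exists_injOn_inter_of_injOn he.injOn (J := J)
  obtain ⟨t₁, ht₁⟩ := exists_mk_Iio_eq (hSJ.trans_lt (mul_lt_of_lt hκ hJ hJ))
  obtain ⟨t₂, ht₂⟩ := exists_mk_Iio_eq hJ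
  obtain ⟨σ⟩ : Nonempty (Iio t₁ ≃ S) := Cardinal.eq.1 ht₁
  obtain ⟨ω⟩ : Nonempty (Iio t₂ ≃ J) := Cardinal.eq.1 ht₂
  set u : Iio t₁ → B := Subtype.val ∘ σ
  set w : Iio t₂ → C := Subtype.val ∘ ω
  have hrange_u : range u = S := by rw [σ.surjective.range_comp, Subtype.range_coe]
  have hrange_w : range w = J := by rw [ω.surjective.range_comp, Subtype.range_coe]
  have hu : InjOn (fun c => u ⁻¹' e c) (range w) := by
    intro c hc c' hc' h
    rw [hrange_w] at hc hc'
    refine hS hc hc' ?_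
    simpa only [← hrange_u, ← image_preimage_eq_range_inter] using congrArg (u '' ·) h
  refine ⟨_, mem_iUnion.2 ⟨(t₁, t₂), mem_range_self (u, fun j => u ⁻¹' e (w j), z ∘ w)⟩,
    fun c hc => ?_⟩
  obtain ⟨j, rfl⟩ : c ∈ range w := hrange_w ▸ hc
  exact traceLookup_apply e a₀ hu z j

theorem mk_traceLookupSet_le {κ γ : Cardinal.{u}} (hκ : ℵ₀ ≤ κ) (hγ : 2 ≤ γ) (hA : #A ≤ γ)
    (hB : #B ≤ γ) : #(traceLookupSet e a₀ κ) ≤ γ ^< κ := by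
  have hκγ := le_powerlt_of_two_le_s6 κ hγ
  have hpiece : ∀ t : κ.ord.ToType × κ.ord.ToType,
      #((Iio t.1 → B) × (Iio t.2 → Set (Iio t.1)) × (Iio t.2 → A)) ≤ γ ^< κ := by
    rintro ⟨t₁, t₂⟩
    have h₁ : #(Iio t₁) < κ := by simpa using mk_Iio_lt t₁
    have h₂ : #(Iio t₂) < κ := by simpa using mk_Iio_lt t₂
    simp only [mk_prod, lift_id, mk_arrow, mk_set]
    calc #B ^ #(Iio t₁) * ((2 ^ #(Iio t₁)) ^ #(Iio t₂) * #A ^ #(Iio t₂))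
        ≤ γ ^ #(Iio t₁) * ((γ ^ #(Iio t₁)) ^ #(Iio t₂) * γ ^ #(Iio t₂)) :=
        mul_le_mul' (power_le_power_right hB)
          (mul_le_mul' (power_le_power_right (power_le_power_right hγ)) (power_le_power_right hA))
      _ = γ ^ (#(Iio t₁) + (#(Iio t₁) * #(Iio t₂) + #(Iio t₂))) := by
        rw [power_add, power_add, power_mul]
      _ ≤ γ ^< κ := le_powerlt γ <|
        add_lt_of_lt hκ h₁ (add_lt_of_lt hκ (mul_lt_of_lt hκ h₁ h₂) h₂)
  calc #(traceLookupSet e a₀ κ)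
      ≤ #(κ.ord.ToType × κ.ord.ToType) * ⨆ t : κ.ord.ToType × κ.ord.ToType,
          #((Iio t.1 → B) × (Iio t.2 → Set (Iio t.1)) × (Iio t.2 → A)) :=
        (mk_iUnion_le _).trans (mul_le_mul' le_rfl (ciSup_mono bddAbove_of_small
          fun _ => mk_range_le))
    _ ≤ γ ^< κ * γ ^< κ := by
        gcongr
        · simpa [mul_eq_self hκ] using hκγ
        · exact ciSup_le' hpiece
    _ = γ ^< κ := mul_eq_self (hκ.trans hκγ)

end TraceLookup

theorem dens_boxTopology_le_powerlt {κ : Cardinal.{u}} (hκ : ℵ₀ ≤ κ) {A B C : Type u}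
    [TopologicalSpace A] [Nonempty B] (hA : 2 ≤ #A) {e : C → Set B}
    (he : Function.Injective e) :
    @dens (C → A) (boxTopology κ fun _ => A) ≤ (#A * #B) ^< κ := by
  have hA₀ : 0 < #A := zero_lt_two.trans_le hA
  have : Nonempty A := mk_ne_zero_iff.1 hA₀.ne'
  have hAγ : #A ≤ #A * #B :=
    le_mul_of_one_le_right' (Cardinal.one_le_iff_ne_zero.2 (mk_ne_zero B))
  have hBγ : #B ≤ #A * #B := le_mul_of_one_le_left' (Cardinal.one_le_iff_pos.2 hA₀)
  exact (@dens_le_mk _ (boxTopology κ fun _ => A) _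
    (dense_traceLookupSet e (Classical.arbitrary A) hκ he)).trans
    (mk_traceLookupSet_le e _ hκ (hA.trans hAγ) hAγ hBγ)

theorem stmt6_general (α β κ : Cardinal.{u}) (hα : 2 ≤ α) (hβ : ℵ₀ ≤ β) (hκ : ℵ₀ ≤ κ)
    (A : Type u) [TopologicalSpace A] (hA : #A = α) :
    (∀ C : Type u, #C = 2 ^ β →
      @dens (∀ _ : C, A) (boxTopology κ fun _ => A) ≤ (α * β) ^< κ) ∧
    (∀ C : Type u, #C = β →
      @dens (∀ _ : C, A) (boxTopology κ fun _ => A) ≤ (α * clog β) ^< κ) := by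
  subst hA
  have hβ₁ : 1 < β := one_lt_aleph0.trans_le hβ
  constructor
  · intro C hC
    have : Nonempty (Quotient.out β) :=
      mk_ne_zero_iff.1 (by simpa using (zero_lt_one.trans hβ₁).ne')
    obtain ⟨e⟩ : Nonempty (C ≃ Set (Quotient.out β)) := Cardinal.eq.1 (by simp [hC])
    simpa using dens_boxTopology_le_powerlt hκ hα e.injective
  · intro C hC
    have : Nonempty (Quotient.out (clog β)) :=
      mk_ne_zero_iff.1 (by simpa using clog_ne_zero hβ₁)
    obtain ⟨e⟩ : Nonempty (C ↪ Set (Quotient.out (clog β))) := by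
      rw [← le_def, hC, mk_set, mk_out]
      exact le_two_power_clog β
    simpa using dens_boxTopology_le_powerlt hκ hα e.injective

theorem stmt6 (α β κ : Cardinal.{u}) (hα : 2 ≤ α) (hβ : ℵ₀ ≤ β) (hκ : ℵ₀ ≤ κ)
    (A : Type u) [TopologicalSpace A] [DiscreteTopology A] (hA : #A = α) :
    (∀ C : Type u, #C = 2 ^ β →
      @dens (∀ _ : C, A) (boxTopology κ fun _ => A) ≤ (α * β) ^< κ) ∧
    (∀ C : Type u, #C = β →
      @dens (∀ _ : C, A) (boxTopology κ fun _ => A) ≤ (α * clog β) ^< κ) :=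
  stmt6_general α β κ hα hβ hκ A hA
end
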